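/- Let 𝔎 be a field and W a finite Coxeter group with Kazhdan–Lusztig basis elements C_w = Σ_{y ≤ w} (−1)^{ℓ(w)−ℓ(y)} p_{y,w}(1) y ∈ 𝔎W. For any K ⊆ S, the elements x C_{w_K} with x ∈ X_K (minimal-length left coset representatives of W_K) form a 𝔎-basis of the left ideal 𝔎W C_{w_K}. -/

import Mathlib

/-!
Since `u · C_{w_K} = ± C_{w_K}` for `u ∈ W_K`, every translate `h · C_{w_K}` equals
`± x · C_{w_K}` for a minimal-length representative `x` of `h W_K`, so the `x · C_{w_K}` span.
For independence, `C_{w_K}` has coefficient `1` at `w_K` and is otherwise supported on shorter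
elements. By Deodhar's lemma `ℓ(x w_K) = ℓ(x) + ℓ(w_K)` for `x ∈ X_K`, so in a nontrivial
combination the coefficient at `x₀ w_K`, for `x₀` of maximal length in the support, comes from
`x₀ · C_{w_K}` alone.

Deodhar's lemma follows from the exchange condition. That in turn comes from the action of `W` on
`W × ZMod 2` in which `s_i` conjugates the first coordinate and flips the second at `s_i`: it shows
that the parity of the number of occurrences of `t` in the right inversion sequence of a word
depends only on the product of the word.
-/

namespace MonoidAlgebra

variable {k G : Type*} [Group G]

theorem coeff_sum_smul_of [Semiring k] [Fintype G] (f : G → k) (g : G) :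
    (∑ y, f y • of k G y).coeff g = f g := by
  classical
  simp [coeff_sum, Finset.sum_apply', coeff_single, Finsupp.single_apply]

theorem span_range_of_mul_eq_span_of_mul [CommSemiring k] (a : MonoidAlgebra k G)
    {H : Subgroup G} (ha : ∀ u ∈ H, ∃ r : k, of k G u * a = r • a) {P : G → Prop}
    (hP : ∀ g, ∃ x, P x ∧ x⁻¹ * g ∈ H) :
    Submodule.span k (Set.range fun x : {x // P x} => of k G x * a) =
      Submodule.span k {b | ∃ g, b = of k G g * a} := by
  refine le_antisymm (Submodule.span_mono ?_) (Submodule.span_le.mpr ?_)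
  · rintro _ ⟨x, rfl⟩
    exact ⟨x, rfl⟩
  · rintro _ ⟨g, rfl⟩
    obtain ⟨x, hx, hxg⟩ := hP g
    obtain ⟨r, hr⟩ := ha _ hxg
    have hg : of k G g * a = r • (of k G x * a) := by
      rw [← mul_inv_cancel_left x g, map_mul, mul_assoc, hr, mul_smul_comm]
    rw [hg]
    exact Submodule.smul_mem _ _ (Submodule.subset_span ⟨⟨x, hx⟩, rfl⟩)

end MonoidAlgebra

open List

namespace CoxeterSystem

variable {B W : Type*} [Group W] {M : CoxeterMatrix B} (cs : CoxeterSystem M W)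

local prefix:100 "s " => cs.simple
local prefix:100 "π " => cs.wordProd
local prefix:100 "ℓ " => cs.length
local prefix:100 "ris " => cs.rightInvSeq
local prefix:100 "lis " => cs.leftInvSeq

theorem reverse_alternatingWord_two_mul (i i' : B) (m : ℕ) :
    (alternatingWord i i' (2 * m)).reverse = alternatingWord i' i (2 * m) := by
  induction m generalizing i i' with
  | zero => rfl
  | succ m ih =>
    have h : 2 * (m + 1) = 2 * m + 1 + 1 := by ring
    rw [h, alternatingWord_succ, alternatingWord_succ', alternatingWord_succ,
      alternatingWord_succ']
    simp [ih]

theorem leftInvSeq_alternatingWord_two_mul (i i' : B) (m : ℕ) :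
    lis (alternatingWord i i' (2 * m)) =
      (range (2 * m)).map fun k => s i * (s i' * s i) ^ k := by
  refine ext_getElem (by simp) fun k hk _ => ?_
  rw [getElem_leftInvSeq_alternatingWord cs i i' m k (by simpa using hk),
    prod_alternatingWord_eq_mul_pow]
  simp [show (2 * k + 1) / 2 = k by omega]

section SignedConj

variable [DecidableEq W]

theorem even_count_rightInvSeq_alternatingWord (i i' : B) (t : W) :
    Even ((ris (alternatingWord i i' (2 * M i i'))).count t) := by
  rw [← reverse_alternatingWord_two_mul, rightInvSeq_reverse, count_reverse,
    leftInvSeq_alternatingWord_two_mul, two_mul, range_add, map_append, count_append, map_map]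
  have hperiodic : ((fun k => s i' * (s i * s i') ^ k) ∘ (M i i' + ·)) =
      fun k => s i' * (s i * s i') ^ k := by
    funext k
    simp [pow_add]
  rw [hperiodic]
  exact ⟨_, rfl⟩

def signedConj (i : B) : Function.End (W × ZMod 2) :=
  fun p => (s i * p.1 * s i, if p.1 = s i then p.2 + 1 else p.2)

theorem prod_map_signedConj_apply (ω : List B) (p : W × ZMod 2) :
    (ω.map cs.signedConj).prod p = (π ω * p.1 * (π ω)⁻¹, p.2 + (ris ω).count p.1) := by
  induction ω with
  | nil => simp; rfl
  | cons i ω ih =>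
    change cs.signedConj i ((ω.map cs.signedConj).prod p) = _
    rw [ih, signedConj]
    have hconj : π ω * p.1 * (π ω)⁻¹ = s i ↔ (π ω)⁻¹ * s i * π ω = p.1 := by
      constructor <;> intro h <;> rw [← h] <;> group
    simp only [wordProd_cons, rightInvSeq, count_cons, beq_iff_eq, ← hconj]
    split_ifs <;> simp [mul_assoc, add_assoc]

theorem prod_map_signedConj_alternatingWord (i i' : B) (m : ℕ) :
    ((alternatingWord i i' (2 * m)).map cs.signedConj).prod =
      (cs.signedConj i * cs.signedConj i') ^ m := by
  induction m with
  | zero => rfl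
  | succ m ih =>
    have h : 2 * (m + 1) = 2 * m + 1 + 1 := by ring
    rw [h, alternatingWord_succ', alternatingWord_succ', if_neg (by simp),
      if_pos (by simp), map_cons, map_cons, prod_cons, prod_cons, ih, pow_succ', mul_assoc]

theorem isLiftable_signedConj : M.IsLiftable cs.signedConj := by
  intro i i'
  funext p
  rw [← prod_map_signedConj_alternatingWord, prod_map_signedConj_apply]
  obtain ⟨c, hc⟩ := even_count_rightInvSeq_alternatingWord cs i i' p.1
  have hprod : π (alternatingWord i i' (2 * M i i')) = 1 := by
    simp [prod_alternatingWord_eq_mul_pow]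
  have htwo : (2 : ZMod 2) = 0 := rfl
  simp [hprod, hc, ← two_mul, htwo]
  rfl

noncomputable def signedConjHom : W →* Function.End (W × ZMod 2) :=
  cs.lift ⟨cs.signedConj, cs.isLiftable_signedConj⟩

theorem signedConjHom_wordProd (ω : List B) :
    cs.signedConjHom (π ω) = (ω.map cs.signedConj).prod := by
  induction ω with
  | nil => simp
  | cons i ω ih =>
    rw [wordProd_cons, map_mul, ih, map_cons, prod_cons, signedConjHom,
      lift_apply_simple cs (isLiftable_signedConj cs)]

theorem count_rightInvSeq_cast_eq_of_wordProd_eq {ω ω' : List B} (h : π ω = π ω') (t : W) :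
    ((ris ω).count t : ZMod 2) = (ris ω').count t := by
  have := congrArg (fun f : Function.End (W × ZMod 2) => (f (t, 0)).2)
    (congrArg cs.signedConjHom h)
  simpa [signedConjHom_wordProd, prod_map_signedConj_apply] using this

end SignedConj

theorem simple_mem_rightInvSeq_of_length_mul_simple_lt {ω : List B} {i : B}
    (h : ℓ (π ω * s i) < ℓ (π ω)) : s i ∈ ris ω := by
  classical
  obtain ⟨ω', hω', hprod'⟩ := cs.exists_isReduced (π ω * s i)
  have hnotmem : s i ∉ ris ω' := fun hmem => by
    have := (cs.isRightInversion_of_mem_rightInvSeq hω' hmem).2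
    rw [← hprod', simple_mul_simple_cancel_right] at this
    omega
  have hcount : (ris (ω'.concat i)).count (s i) = 1 := by
    have hconj := count_map_of_injective (ris ω') _ (MulAut.conj (s i)).injective (s i)
    rw [rightInvSeq_concat, concat_eq_append, count_append, count_singleton_self]
    simpa [count_eq_zero_of_not_mem hnotmem] using hconj
  have hprod : π ω = π (ω'.concat i) := by
    rw [wordProd_concat, ← hprod', simple_mul_simple_cancel_right]
  have hparity := cs.count_rightInvSeq_cast_eq_of_wordProd_eq hprod (s i)
  by_contra hmem
  rw [hcount, count_eq_zero_of_not_mem hmem] at hparity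
  exact absurd hparity (by decide)

theorem exists_eraseIdx_of_length_mul_simple_lt {ω : List B} {i : B}
    (h : ℓ (π ω * s i) < ℓ (π ω)) : ∃ j < ω.length, π ω * s i = π (ω.eraseIdx j) := by
  obtain ⟨j, hj, hsj⟩ := mem_iff_getElem.mp (cs.simple_mem_rightInvSeq_of_length_mul_simple_lt h)
  refine ⟨j, by simpa using hj, ?_⟩
  rw [← wordProd_mul_getD_rightInvSeq, getD_eq_getElem _ _ hj, hsj]

theorem exists_eraseIdx_append_of_length_mul_simple_lt {α ω : List B} {i : B}
    (h : ℓ (π (α ++ ω) * s i) < ℓ (π (α ++ ω))) :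
    (∃ j < α.length, π (α ++ ω) * s i = π (α.eraseIdx j) * π ω) ∨
      ∃ j < ω.length, π ω * s i = π (ω.eraseIdx j) := by
  obtain ⟨j, hj, heq⟩ := cs.exists_eraseIdx_of_length_mul_simple_lt h
  rcases lt_or_ge j α.length with hjα | hjα
  · rw [eraseIdx_append_of_lt_length hjα, wordProd_append cs (α.eraseIdx j)] at heq
    exact Or.inl ⟨j, hjα, heq⟩
  · rw [eraseIdx_append_of_length_le hjα, wordProd_append, wordProd_append, mul_assoc] at heq
    exact Or.inr ⟨j - α.length, by simp at hj; omega, mul_left_cancel heq⟩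

theorem mem_closure_simple_image_iff {K : Set B} {u : W} :
    u ∈ Subgroup.closure (cs.simple '' K) ↔ ∃ ω : List B, (∀ i ∈ ω, i ∈ K) ∧ π ω = u := by
  constructor
  · intro hu
    induction hu using Subgroup.closure_induction with
    | mem w hw =>
      obtain ⟨i, hi, rfl⟩ := hw
      exact ⟨[i], by simpa using hi, by simp⟩
    | one => exact ⟨[], by simp, rfl⟩
    | mul w w' _ _ ihw ihw' =>
      obtain ⟨ω, hω, rfl⟩ := ihw
      obtain ⟨ω', hω', rfl⟩ := ihw'
      exact ⟨ω ++ ω', fun i hi => (mem_append.mp hi).elim (hω i) (hω' i), wordProd_append cs ω ω'⟩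
    | inv w _ ihw =>
      obtain ⟨ω, hω, rfl⟩ := ihw
      exact ⟨ω.reverse, by simpa using hω, wordProd_reverse cs ω⟩
  · rintro ⟨ω, hω, rfl⟩
    induction ω with
    | nil => exact one_mem _
    | cons i ω ih =>
      rw [wordProd_cons]
      exact mul_mem (Subgroup.subset_closure ⟨i, hω i mem_cons_self, rfl⟩)
        (ih fun j hj => hω j (mem_cons_of_mem i hj))

def IsMinimalLeftCosetRep (H : Subgroup W) (x : W) : Prop :=
  ∀ u ∈ H, ℓ x ≤ ℓ (x * u)

theorem exists_isMinimalLeftCosetRep (H : Subgroup W) (h : W) :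
    ∃ x, cs.IsMinimalLeftCosetRep H x ∧ x⁻¹ * h ∈ H := by
  obtain ⟨x, hx, hmin⟩ := (measure cs.length).wf.has_min {v | h⁻¹ * v ∈ H} ⟨h, by simp⟩
  have hx : h⁻¹ * x ∈ H := hx
  refine ⟨x, fun u hu => not_lt.mp (hmin (x * u) ?_), by simpa using inv_mem hx⟩
  simpa [← mul_assoc] using mul_mem hx hu

theorem IsMinimalLeftCosetRep.length_mul_wordProd {cs : CoxeterSystem M W} {K : Set B} {x : W}
    (hx : cs.IsMinimalLeftCosetRep (Subgroup.closure (cs.simple '' K)) x) {ω : List B}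
    (hK : ∀ i ∈ ω, i ∈ K)
    (hmin : ∀ ω' : List B, (∀ i ∈ ω', i ∈ K) → cs.wordProd ω' = cs.wordProd ω →
      ω.length ≤ ω'.length) :
    cs.length (x * cs.wordProd ω) = cs.length x + ω.length := by
  induction ω using List.reverseRecOn with
  | nil => simp
  | append_singleton ω i ih =>
    have hKω : ∀ j ∈ ω, j ∈ K := fun j hj => hK j (mem_append_left _ hj)
    have hiK : i ∈ K := hK i (by simp)
    have hminω : ∀ ω' : List B, (∀ j ∈ ω', j ∈ K) → cs.wordProd ω' = cs.wordProd ω →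
        ω.length ≤ ω'.length := fun ω' hK' hω' => by
      have := hmin (ω' ++ [i]) (by simpa [or_imp, forall_and] using ⟨hK', hiK⟩)
        (by simp [wordProd_append, hω'])
      simpa using this
    have hlen := ih hKω hminω
    rw [wordProd_append, wordProd_singleton, ← mul_assoc, length_append, length_singleton]
    rcases cs.length_mul_simple (x * cs.wordProd ω) i with hup | hdown
    · omega
    exfalso
    obtain ⟨α, hα, rfl⟩ := cs.exists_isReduced x
    rw [← wordProd_append] at hdown
    rcases cs.exists_eraseIdx_append_of_length_mul_simple_lt (α := α) (ω := ω) (i := i)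
      (by omega) with ⟨j, hj, heq⟩ | ⟨j, hj, heq⟩
    · -- the deleted letter lies in `x`, so `x` is not of minimal length in `x W_K`
      have hω : cs.wordProd ω ∈ Subgroup.closure (cs.simple '' K) :=
        (mem_closure_simple_image_iff cs).mpr ⟨ω, hKω, rfl⟩
      have hconj : cs.wordProd ω * cs.simple i * (cs.wordProd ω)⁻¹ ∈
          Subgroup.closure (cs.simple '' K) :=
        mul_mem (mul_mem hω (Subgroup.subset_closure ⟨i, hiK, rfl⟩)) (inv_mem hω)
      have hshorter := hx _ hconj
      rw [← mul_assoc, ← mul_assoc, ← wordProd_append, heq, mul_inv_cancel_right] at hshorter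
      have := cs.length_wordProd_le (α.eraseIdx j)
      rw [length_eraseIdx_of_lt hj] at this
      rw [hα.eq] at hshorter
      omega
    · -- the deleted letter lies in `ω`, giving a shorter word in `K` for the same element
      have := hmin (ω.eraseIdx j) (fun k hk => hKω k (mem_of_mem_eraseIdx hk))
        (by rw [← heq, wordProd_append, wordProd_singleton])
      rw [length_eraseIdx_of_lt hj, length_append, length_singleton] at this
      omega

theorem IsMinimalLeftCosetRep.length_mul {cs : CoxeterSystem M W} {K : Set B} {x : W}
    (hx : cs.IsMinimalLeftCosetRep (Subgroup.closure (cs.simple '' K)) x) {u : W}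
    (hu : u ∈ Subgroup.closure (cs.simple '' K)) :
    cs.length (x * u) = cs.length x + cs.length u := by
  obtain ⟨ω, ⟨hK, rfl⟩, hmin⟩ := (measure List.length).wf.has_min
    {ω | (∀ i ∈ ω, i ∈ K) ∧ cs.wordProd ω = u} ((mem_closure_simple_image_iff cs).mp hu)
  have hadd := hx.length_mul_wordProd hK fun ω' hK' hω' => not_lt.mp (hmin ω' ⟨hK', hω'⟩)
  have := cs.length_wordProd_le ω
  have := cs.length_mul_le x (cs.wordProd ω)
  omega

open MonoidAlgebra in
theorem linearIndependent_of_mul_of_leading_term {k : Type*} [Ring k] {a : MonoidAlgebra k W}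
    {w : W} (hw : IsUnit (a.coeff w)) (ha : ∀ g ≠ w, a.coeff g ≠ 0 → ℓ g < ℓ w)
    {P : W → Prop} (hP : ∀ x, P x → ℓ (x * w) = ℓ x + ℓ w) :
    LinearIndependent k fun x : {x // P x} => of k W x * a := by
  rw [linearIndependent_iff]
  intro l hl
  by_contra hne
  obtain ⟨x₀, hx₀, hmax⟩ := l.support.exists_max_image (fun x => ℓ (x : W))
    (Finsupp.support_nonempty_iff.mpr hne)
  have hcoeff : (Finsupp.linearCombination k (fun x : {x // P x} => of k W x * a) l).coeff
      (x₀ * w) = l x₀ * a.coeff w := by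
    rw [Finsupp.linearCombination_apply, Finsupp.sum, coeff_sum, Finset.sum_apply',
      Finset.sum_eq_single x₀]
    · simp [coeff_single_mul_apply]
    · intro x hx hxne
      have hvanish : a.coeff ((x : W)⁻¹ * (x₀ * w)) = 0 := by
        by_contra hnz
        have hne : (x : W)⁻¹ * (x₀ * w) ≠ w := fun h =>
          hxne (Subtype.ext (mul_right_cancel (inv_mul_eq_iff_eq_mul.mp h)).symm)
        have hlt := ha _ hne hnz
        have htri := cs.length_mul_le x ((x : W)⁻¹ * (x₀ * w))
        rw [mul_inv_cancel_left, hP _ x₀.2] at htri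
        have := hmax x hx
        omega
      simp [coeff_single_mul_apply, hvanish]
    · exact fun h => absurd hx₀ h
  rw [hl] at hcoeff
  exact Finsupp.mem_support_iff.mp hx₀ (hw.mul_left_eq_zero.mp (by simpa using hcoeff.symm))

end CoxeterSystem

theorem KL_basis_xC_general {𝔎 B W : Type*} [Field 𝔎] [Group W] [Fintype W] [DecidableEq W]
    {M : CoxeterMatrix B} (cs : CoxeterSystem M W)
    (blt : W → W → Prop) [DecidableRel blt]
    (hblt : ∀ y w : W, blt y w → cs.length y < cs.length w)
    (p : W → W → Polynomial ℤ) (hp : ∀ w : W, p w w = 1)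
    (C : W → MonoidAlgebra 𝔎 W)
    (hC : ∀ w : W, C w = ∑ y : W,
      (if y = w ∨ blt y w then
        (((-1 : ℤ) ^ (cs.length w - cs.length y) * (p y w).eval 1 : ℤ) : 𝔎) else 0) •
        MonoidAlgebra.of 𝔎 W y)
    (K : Set B)
    (wK : W) (hwKmem : wK ∈ Subgroup.closure (cs.simple '' K))
    (hanti : ∀ u ∈ Subgroup.closure (cs.simple '' K),
      MonoidAlgebra.of 𝔎 W u * C wK = ((-1 : 𝔎) ^ cs.length u) • C wK) :
    LinearIndependent 𝔎
      (fun x : {x : W // ∀ u ∈ Subgroup.closure (cs.simple '' K),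
          cs.length x ≤ cs.length (x * u)} =>
        MonoidAlgebra.of 𝔎 W (x : W) * C wK) ∧
    Submodule.span 𝔎
      (Set.range (fun x : {x : W // ∀ u ∈ Subgroup.closure (cs.simple '' K),
          cs.length x ≤ cs.length (x * u)} =>
        MonoidAlgebra.of 𝔎 W (x : W) * C wK)) =
    Submodule.span 𝔎 {a : MonoidAlgebra 𝔎 W | ∃ h : W, a = MonoidAlgebra.of 𝔎 W h * C wK} := by
  have hcoeff (g : W) : (C wK).coeff g = if g = wK ∨ blt g wK then
      (((-1 : ℤ) ^ (cs.length wK - cs.length g) * (p g wK).eval 1 : ℤ) : 𝔎) else 0 := by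
    rw [hC, MonoidAlgebra.coeff_sum_smul_of]
  have hlead : IsUnit ((C wK).coeff wK) := by simp [hcoeff, hp]
  have hlower (g : W) (hg : g ≠ wK) (hnz : (C wK).coeff g ≠ 0) : cs.length g < cs.length wK := by
    rw [hcoeff] at hnz
    split_ifs at hnz with hbruhat
    · exact hblt g wK (hbruhat.resolve_left hg)
    · exact absurd rfl hnz
  exact ⟨cs.linearIndependent_of_mul_of_leading_term hlead hlower
      fun x hx => CoxeterSystem.IsMinimalLeftCosetRep.length_mul hx hwKmem,
    MonoidAlgebra.span_range_of_mul_eq_span_of_mul (C wK) (fun u hu => ⟨_, hanti u hu⟩)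
      (cs.exists_isMinimalLeftCosetRep _)⟩

/-- Let `𝔎` be a field and `W` a finite Coxeter group with
Kazhdan–Lusztig basis elements `C_w = Σ_{y ≤ w} (−1)^{ℓ(w)−ℓ(y)} p_{y,w}(1) · y ∈ 𝔎W`
(here `blt` is the strict Bruhat order, `p` the Kazhdan–Lusztig polynomials, with
`p_{w,w} = 1`, and we use the fact `u · C_{w_K} = (−1)^{ℓ(u)} C_{w_K}` for `u ∈ W_K`).
For `K ⊆ S`, the elements `x · C_{w_K}` with `x ∈ X_K` (minimal-length left coset
representatives of `W_K`) form a `𝔎`-basis of the left ideal `𝔎W · C_{w_K}`. -/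
theorem KL_basis_xC {𝔎 B W : Type*} [Field 𝔎] [Group W] [Fintype W] [DecidableEq W]
    {M : CoxeterMatrix B} (cs : CoxeterSystem M W)
    (blt : W → W → Prop) [DecidableRel blt]
    (hblt : ∀ y w : W, blt y w → cs.length y < cs.length w)
    (p : W → W → Polynomial ℤ) (hp : ∀ w : W, p w w = 1)
    (C : W → MonoidAlgebra 𝔎 W)
    (hC : ∀ w : W, C w = ∑ y : W,
      (if y = w ∨ blt y w then
        (((-1 : ℤ) ^ (cs.length w - cs.length y) * (p y w).eval 1 : ℤ) : 𝔎) else 0) •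
        MonoidAlgebra.of 𝔎 W y)
    (K : Set B)
    (wK : W) (hwKmem : wK ∈ Subgroup.closure (cs.simple '' K))
    (hwKlong : ∀ u ∈ Subgroup.closure (cs.simple '' K), cs.length u ≤ cs.length wK)
    (hanti : ∀ u ∈ Subgroup.closure (cs.simple '' K),
      MonoidAlgebra.of 𝔎 W u * C wK = ((-1 : 𝔎) ^ cs.length u) • C wK) :
    LinearIndependent 𝔎
      (fun x : {x : W // ∀ u ∈ Subgroup.closure (cs.simple '' K),
          cs.length x ≤ cs.length (x * u)} =>
        MonoidAlgebra.of 𝔎 W (x : W) * C wK) ∧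
    Submodule.span 𝔎
      (Set.range (fun x : {x : W // ∀ u ∈ Subgroup.closure (cs.simple '' K),
          cs.length x ≤ cs.length (x * u)} =>
        MonoidAlgebra.of 𝔎 W (x : W) * C wK)) =
    Submodule.span 𝔎 {a : MonoidAlgebra 𝔎 W | ∃ h : W, a = MonoidAlgebra.of 𝔎 W h * C wK} :=
  KL_basis_xC_general cs blt hblt p hp C hC K wK hwKmem hanti
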